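/- For all indices t, u, v ∈ {1,…,n} and all r ∈ ℝ^n: D[t v | u](r) − D[u | t v](r) = ∂_t∂_u∂_v g(r). (This is the coordinate content of the recovery of the canonical cubic tensor from the canonical divergence, C(X,Y,Z) = −D_M[Z|XY] + D_M[XY|Z], since C is locally the third derivative of the generating function.) -/

import Mathlib

/-!
In its first argument the divergence is `g(a) - Σ_{j∈J} ∂_j g(a) (a_j - b_j)` plus terms affine
in `a`, and in its second argument it is `-g(b) + Σ_{i∈I} ∂_i g(b) (b_i - a_i)` plus terms affine
in `b`. Differentiating therefore gives `D[t v | u] = [u ∈ J] ∂_t∂_v∂_u g(a)` and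
`D[u | t v] = -[u ∈ I] ∂_t∂_v∂_u g(b)` everywhere; since `I ⊔ J` partitions the indices the
difference on the diagonal is `∂_t∂_v∂_u g`, which is `∂_t∂_u∂_v g` by the symmetry of second
derivatives.
-/

/-- Partial derivative in the k-th coordinate. -/
noncomputable def pder {n : ℕ} (k : Fin n) (g : (Fin n → ℝ) → ℝ) : (Fin n → ℝ) → ℝ :=
  fun a => deriv (fun t => g (Function.update a k t)) (a k)

/-- The canonical divergence `D(a,b)` associated to a generating function `g`
and a partition `I ⊔ J` of the index set. -/
noncomputable def canDiv {n : ℕ} (I J : Finset (Fin n)) (g : (Fin n → ℝ) → ℝ)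
    (a b : Fin n → ℝ) : ℝ :=
  g a - g b - ∑ j ∈ J, pder j g a * (a j - b j) + ∑ i ∈ I, pder i g b * (b i - a i)

/-- Partial derivative in the u-th coordinate of the first argument. -/
noncomputable def dFst {n : ℕ} (u : Fin n) (F : (Fin n → ℝ) → (Fin n → ℝ) → ℝ) :
    (Fin n → ℝ) → (Fin n → ℝ) → ℝ :=
  fun a b => deriv (fun t => F (Function.update a u t) b) (a u)

/-- Partial derivative in the u-th coordinate of the second argument. -/
noncomputable def dSnd {n : ℕ} (u : Fin n) (F : (Fin n → ℝ) → (Fin n → ℝ) → ℝ) :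
    (Fin n → ℝ) → (Fin n → ℝ) → ℝ :=
  fun a b => deriv (fun t => F a (Function.update b u t)) (b u)

open Function
open scoped ContDiff

section PartialDerivative

variable {n : ℕ} {f : (Fin n → ℝ) → ℝ} {a : Fin n → ℝ}

lemma hasDerivAt_update_apply (a : Fin n → ℝ) (k i : Fin n) (x : ℝ) :
    HasDerivAt (fun s => update a k s i) (if i = k then 1 else 0) x := by
  simpa [Pi.single_apply] using hasDerivAt_pi.1 (hasDerivAt_update a k x) i

lemma DifferentiableAt.hasDerivAt_update_fderiv (k : Fin n) (hf : DifferentiableAt ℝ f a) :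
    HasDerivAt (fun s => f (update a k s)) (fderiv ℝ f a (Pi.single k 1)) (a k) := by
  refine HasFDerivAt.comp_hasDerivAt (a k) ?_ (hasDerivAt_update a k (a k))
  rw [update_eq_self]
  exact hf.hasFDerivAt

lemma DifferentiableAt.pder_eq_fderiv (k : Fin n) (hf : DifferentiableAt ℝ f a) :
    pder k f a = fderiv ℝ f a (Pi.single k 1) :=
  (hf.hasDerivAt_update_fderiv k).deriv

lemma DifferentiableAt.hasDerivAt_pder (k : Fin n) (hf : DifferentiableAt ℝ f a) :
    HasDerivAt (fun s => f (update a k s)) (pder k f a) (a k) :=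
  hf.pder_eq_fderiv k ▸ hf.hasDerivAt_update_fderiv k

lemma DifferentiableAt.hasDerivAt_ite_pder (p : Prop) [Decidable p] (k : Fin n)
    (hf : DifferentiableAt ℝ f a) :
    HasDerivAt (fun s => if p then f (update a k s) else 0) (if p then pder k f a else 0)
      (a k) := by
  split_ifs
  exacts [hf.hasDerivAt_pder k, hasDerivAt_const _ _]

lemma Differentiable.pder_eq_fderiv (k : Fin n) (hf : Differentiable ℝ f) :
    pder k f = fun x => fderiv ℝ f x (Pi.single k 1) :=
  funext fun x => (hf x).pder_eq_fderiv k

lemma contDiff_pder {m : WithTop ℕ∞} (k : Fin n) (hf : ContDiff ℝ (m + 1) f) :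
    ContDiff ℝ m (pder k f) := by
  rw [(hf.differentiable (by simp)).pder_eq_fderiv k]
  exact (hf.fderiv_right le_rfl).clm_apply contDiff_const

lemma ContDiff.differentiable_pder (hf : ContDiff ℝ ∞ f) (k : Fin n) :
    Differentiable ℝ (pder k f) :=
  (contDiff_pder (m := ∞) k hf).differentiable (by simp)

lemma pder_comm (hf : ContDiff ℝ 2 f) (i k : Fin n) : pder i (pder k f) = pder k (pder i f) := by
  have hdf : Differentiable ℝ f := hf.differentiable two_ne_zero
  have hdf' : Differentiable ℝ (fderiv ℝ f) :=
    (hf.fderiv_right (m := 1) le_rfl).differentiable one_ne_zero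
  have second_deriv (j m : Fin n) (x : Fin n → ℝ) :
      pder j (pder m f) x = fderiv ℝ (fderiv ℝ f) x (Pi.single j 1) (Pi.single m 1) := by
    rw [hdf.pder_eq_fderiv m,
      ((hdf'.clm_apply (differentiable_const _)) x).pder_eq_fderiv j,
      fderiv_clm_apply (hdf' x) (differentiableAt_const _)]
    simp
  funext x
  rw [second_deriv, second_deriv]
  exact hf.contDiffAt.isSymmSndFDerivAt (by simp [minSmoothness_of_isRCLikeNormedField]) _ _

lemma hasDerivAt_sum_mul_sub_update (s : Finset (Fin n)) (c b a : Fin n → ℝ) (k : Fin n) :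
    HasDerivAt (fun x => ∑ i ∈ s, c i * (b i - update a k x i))
      (-(if k ∈ s then c k else 0)) (a k) := by
  simpa [Finset.sum_ite_eq'] using HasDerivAt.fun_sum fun i _ =>
    ((hasDerivAt_update_apply a k i (a k)).const_sub (b i)).const_mul (c i)

lemma hasDerivAt_sum_mul_update_sub (s : Finset (Fin n)) (φ : Fin n → (Fin n → ℝ) → ℝ)
    (a b : Fin n → ℝ) (k : Fin n) (hφ : ∀ i ∈ s, DifferentiableAt ℝ (φ i) b) :
    HasDerivAt (fun x => ∑ i ∈ s, φ i (update b k x) * (update b k x i - a i))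
      (∑ i ∈ s, pder k (φ i) b * (b i - a i) + if k ∈ s then φ k b else 0) (b k) := by
  simpa [Finset.sum_add_distrib, Finset.sum_ite_eq'] using HasDerivAt.fun_sum fun i hi =>
    ((hφ i hi).hasDerivAt_pder k).fun_mul ((hasDerivAt_update_apply b k i (b k)).sub_const (a i))

end PartialDerivative

section CanonicalDivergence

variable {n : ℕ} (I J : Finset (Fin n)) {g : (Fin n → ℝ) → ℝ}

lemma dSnd_canDiv (hg : ContDiff ℝ ∞ g) (u : Fin n) :
    dSnd u (canDiv I J g) = fun a b =>
      (if u ∈ J then pder u g a else 0) - pder u g b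
        + (∑ i ∈ I, pder u (pder i g) b * (b i - a i)) + (if u ∈ I then pder u g b else 0) := by
  funext a b
  have h := (((hasDerivAt_const (b u) (g a)).fun_sub
      ((hg.differentiable (by simp) b).hasDerivAt_pder u)).fun_sub
      (hasDerivAt_sum_mul_sub_update J (fun j => pder j g a) a b u)).fun_add
    (hasDerivAt_sum_mul_update_sub I (fun i => pder i g) a b u
      fun i _ => hg.differentiable_pder i b)
  simp only [dSnd, canDiv]
  rw [h.deriv]
  ring

lemma dFst_dSnd_canDiv (hg : ContDiff ℝ ∞ g) (u v : Fin n) :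
    dFst v (dSnd u (canDiv I J g)) = fun a b =>
      (if u ∈ J then pder v (pder u g) a else 0) - (if v ∈ I then pder u (pder v g) b else 0) := by
  funext a b
  have h := (((hg.differentiable_pder u a).hasDerivAt_ite_pder (u ∈ J) v).sub_const
      (pder u g b)).fun_add
    (hasDerivAt_sum_mul_sub_update I (fun i => pder u (pder i g) b) b a v) |>.add_const
      (if u ∈ I then pder u g b else 0)
  rw [dFst, dSnd_canDiv I J hg]
  beta_reduce
  rw [h.deriv]
  ring

lemma dFst_dFst_dSnd_canDiv (hg : ContDiff ℝ ∞ g) (t u v : Fin n) (a b : Fin n → ℝ) :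
    dFst t (dFst v (dSnd u (canDiv I J g))) a b
      = if u ∈ J then pder t (pder v (pder u g)) a else 0 := by
  have h := (((contDiff_pder (m := ∞) u hg).differentiable_pder v a).hasDerivAt_ite_pder
    (u ∈ J) t).sub_const (if v ∈ I then pder u (pder v g) b else 0)
  rw [dFst, dFst_dSnd_canDiv I J hg]
  exact h.deriv

lemma dSnd_dSnd_canDiv (hg : ContDiff ℝ ∞ g) (t v : Fin n) :
    dSnd t (dSnd v (canDiv I J g)) = fun a b =>
      -pder t (pder v g) b + (∑ i ∈ I, pder t (pder v (pder i g)) b * (b i - a i))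
        + (if t ∈ I then pder v (pder t g) b else 0)
        + (if v ∈ I then pder t (pder v g) b else 0) := by
  funext a b
  have h := (((hasDerivAt_const (b t) (if v ∈ J then pder v g a else 0)).fun_sub
      ((hg.differentiable_pder v b).hasDerivAt_pder t)).fun_add
      (hasDerivAt_sum_mul_update_sub I (fun i => pder v (pder i g)) a b t
        fun i _ => (contDiff_pder (m := ∞) i hg).differentiable_pder v b)).fun_add
    ((hg.differentiable_pder v b).hasDerivAt_ite_pder (v ∈ I) t)
  rw [dSnd, dSnd_canDiv I J hg]
  beta_reduce
  rw [h.deriv]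
  ring

lemma dFst_dSnd_dSnd_canDiv (hg : ContDiff ℝ ∞ g) (t u v : Fin n) (a b : Fin n → ℝ) :
    dFst u (dSnd t (dSnd v (canDiv I J g))) a b
      = -(if u ∈ I then pder t (pder v (pder u g)) b else 0) := by
  have h := (hasDerivAt_const (a u) (-pder t (pder v g) b)).fun_add
      (hasDerivAt_sum_mul_sub_update I (fun i => pder t (pder v (pder i g)) b) b a u)
      |>.add_const (if t ∈ I then pder v (pder t g) b else 0)
      |>.add_const (if v ∈ I then pder t (pder v g) b else 0)
  rw [dFst, dSnd_dSnd_canDiv I J hg]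
  beta_reduce
  rw [h.deriv]
  ring

end CanonicalDivergence

theorem cubic_tensor_from_divergence {n : ℕ} (I J : Finset (Fin n))
    (hdisj : Disjoint I J) (hunion : I ∪ J = Finset.univ)
    (g : (Fin n → ℝ) → ℝ) (hg : ContDiff ℝ (⊤ : ℕ∞) g)
    (t u v : Fin n) (r : Fin n → ℝ) :
    dFst t (dFst v (dSnd u (canDiv I J g))) r r
      - dFst u (dSnd t (dSnd v (canDiv I J g))) r r
      = pder t (pder u (pder v g)) r := by
  rw [dFst_dFst_dSnd_canDiv I J hg, dFst_dSnd_dSnd_canDiv I J hg, sub_neg_eq_add,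
    pder_comm (hg.of_le (WithTop.coe_le_coe.2 le_top)) v u]
  rcases Finset.mem_union.mp (hunion ▸ Finset.mem_univ u : u ∈ I ∪ J) with hI | hJ
  · simp [hI, Finset.disjoint_left.mp hdisj hI]
  · simp [hJ, Finset.disjoint_right.mp hdisj hJ]
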